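/- Under the assumptions that a : [0,1] → ℝ is absolutely continuous, a(x₀)=0 for some x₀ ∈ (0,1), a > 0 on [0,1]\{x₀}, and (x-x₀)a'(x) ≤ K a(x) a.e. with K ∈ (0,1), the function 1/a is integrable on (0,1). -/

import Mathlib

/-!
The inequality `(x - x₀) a' ≤ K a` says that `a(x) |x - x₀|^(-K)` has derivative of sign
opposite to `x - x₀`; as `a` is absolutely continuous, integrating this derivative shows that the
product increases on `[0, x₀)` and decreases on `(x₀, 1]`. Hence
`a(x) |x - x₀|^(-K) ≥ c := min (a 0 * x₀^(-K)) (a 1 * (1 - x₀)^(-K)) > 0`, and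
`1/a ≤ c⁻¹ |x - x₀|^(-K)` is integrable because `K < 1`.
-/

open MeasureTheory Set

namespace AbsolutelyContinuousOnInterval

theorem congr {X : Type*} [PseudoMetricSpace X] {f g : ℝ → X} {a b : ℝ}
    (hf : AbsolutelyContinuousOnInterval f a b) (hfg : EqOn f g (uIcc a b)) :
    AbsolutelyContinuousOnInterval g a b :=
  Filter.Tendsto.congr' (Filter.eventually_inf_principal.2 <| Filter.Eventually.of_forall
    fun E hE => Finset.sum_congr rfl fun i hi => by rw [hfg (hE.1 i hi).1, hfg (hE.1 i hi).2]) hf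

theorem of_eq_add_integral {f f' : ℝ → ℝ} {a b : ℝ} (hf' : IntervalIntegrable f' volume a b)
    (hf : ∀ x ∈ uIcc a b, f x = f a + ∫ t in a..x, f' t) :
    AbsolutelyContinuousOnInterval f a b :=
  (contDiffOn_const.absolutelyContinuousOnInterval.add
    (hf'.absolutelyContinuousOnInterval_intervalIntegral left_mem_uIcc)).congr
    fun x hx => (hf x hx).symm

variable {f g : ℝ → ℝ} {a b : ℝ}

theorem le_of_ae_deriv_mul_nonneg (hf : AbsolutelyContinuousOnInterval f a b)
    (hg : AbsolutelyContinuousOnInterval g a b) (hab : a ≤ b)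
    (h : ∀ᵐ t ∂volume.restrict (Icc a b), 0 ≤ deriv f t * g t + f t * deriv g t) :
    f a * g a ≤ f b * g b := by
  rw [← sub_nonneg, ← hf.integral_deriv_mul_eq_sub hg]
  exact intervalIntegral.integral_nonneg_of_ae_restrict hab h

theorem le_of_ae_deriv_mul_nonpos (hf : AbsolutelyContinuousOnInterval f a b)
    (hg : AbsolutelyContinuousOnInterval g a b) (hab : a ≤ b)
    (h : ∀ᵐ t ∂volume.restrict (Icc a b), deriv f t * g t + f t * deriv g t ≤ 0) :
    f b * g b ≤ f a * g a := by
  have := intervalIntegral.integral_nonneg_of_ae_restrict hab (h.mono fun t ht => neg_nonneg.2 ht)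
  rw [intervalIntegral.integral_neg, hf.integral_deriv_mul_eq_sub hg] at this
  linarith

theorem antitoneOn_mul_sub_rpow_neg {x₀ K : ℝ}
    (hf : AbsolutelyContinuousOnInterval f x₀ b)
    (h : ∀ᵐ t ∂volume.restrict (Ioc x₀ b), (t - x₀) * deriv f t ≤ K * f t) :
    AntitoneOn (fun t => f t * (t - x₀) ^ (-K)) (Ioc x₀ b) := by
  intro s hs t ht hst
  have hpos : ∀ y ∈ Icc s t, 0 < y - x₀ := fun y hy => sub_pos.2 (hs.1.trans_le hy.1)
  have hderiv : ∀ y ∈ Icc s t,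
      HasDerivAt (fun t => (t - x₀) ^ (-K)) (-K * (y - x₀) ^ (-K - 1)) y := fun y hy => by
    simpa using ((hasDerivAt_id y).sub_const x₀).rpow_const (p := -K) (Or.inl (hpos y hy).ne')
  have hw : AbsolutelyContinuousOnInterval (fun t => (t - x₀) ^ (-K)) s t := by
    refine ContDiffOn.absolutelyContinuousOnInterval ?_
    rw [uIcc_of_le hst]
    exact (contDiffOn_id.sub contDiffOn_const).rpow_const_of_ne fun y hy => (hpos y hy).ne'
  have hsub : Icc s t ⊆ Ioc x₀ b := Icc_subset_Ioc hs.1 ht.2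
  refine (hf.mono ?_).le_of_ae_deriv_mul_nonpos hw hst ?_
  · rw [uIcc_of_le hst, uIcc_of_le (hs.1.le.trans hs.2)]
    exact hsub.trans Ioc_subset_Icc_self
  filter_upwards [ae_restrict_of_ae_restrict_of_subset hsub h, ae_restrict_mem measurableSet_Icc]
    with y hy hmem
  rw [(hderiv y hmem).deriv]
  have hfactor : deriv f y * (y - x₀) ^ (-K) + f y * (-K * (y - x₀) ^ (-K - 1))
      = (y - x₀) ^ (-K - 1) * ((y - x₀) * deriv f y - K * f y) := by
    have hne := (hpos y hmem).ne'
    rw [Real.rpow_sub_one hne]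
    field_simp
    ring
  rw [hfactor]
  exact mul_nonpos_of_nonneg_of_nonpos (Real.rpow_nonneg (hpos y hmem).le _) (sub_nonpos.2 hy)

theorem monotoneOn_mul_sub_rpow_neg {x₀ K : ℝ}
    (hf : AbsolutelyContinuousOnInterval f a x₀)
    (h : ∀ᵐ t ∂volume.restrict (Ico a x₀), (t - x₀) * deriv f t ≤ K * f t) :
    MonotoneOn (fun t => f t * (x₀ - t) ^ (-K)) (Ico a x₀) := by
  intro s hs t ht hst
  have hpos : ∀ y ∈ Icc s t, 0 < x₀ - y := fun y hy => sub_pos.2 (hy.2.trans_lt ht.2)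
  have hderiv : ∀ y ∈ Icc s t,
      HasDerivAt (fun t => (x₀ - t) ^ (-K)) (K * (x₀ - y) ^ (-K - 1)) y := fun y hy => by
    simpa using ((hasDerivAt_id y).const_sub x₀).rpow_const (p := -K) (Or.inl (hpos y hy).ne')
  have hw : AbsolutelyContinuousOnInterval (fun t => (x₀ - t) ^ (-K)) s t := by
    refine ContDiffOn.absolutelyContinuousOnInterval ?_
    rw [uIcc_of_le hst]
    exact (contDiffOn_const.sub contDiffOn_id).rpow_const_of_ne fun y hy => (hpos y hy).ne'
  have hsub : Icc s t ⊆ Ico a x₀ := Icc_subset_Ico hs.1 ht.2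
  refine (hf.mono ?_).le_of_ae_deriv_mul_nonneg hw hst ?_
  · rw [uIcc_of_le hst, uIcc_of_le (hs.1.trans hs.2.le)]
    exact hsub.trans Ico_subset_Icc_self
  filter_upwards [ae_restrict_of_ae_restrict_of_subset hsub h, ae_restrict_mem measurableSet_Icc]
    with y hy hmem
  rw [(hderiv y hmem).deriv]
  have hfactor : deriv f y * (x₀ - y) ^ (-K) + f y * (K * (x₀ - y) ^ (-K - 1))
      = (x₀ - y) ^ (-K - 1) * (K * f y - (y - x₀) * deriv f y) := by
    have hne := (hpos y hmem).ne'
    rw [Real.rpow_sub_one hne]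
    field_simp
    ring
  rw [hfactor]
  exact mul_nonneg (Real.rpow_nonneg (hpos y hmem).le _) (sub_nonneg.2 hy)

end AbsolutelyContinuousOnInterval

theorem intervalIntegrable_abs_sub_rpow_neg {K : ℝ} (hK : K < 1) (x₀ a b : ℝ) :
    IntervalIntegrable (fun x => |x - x₀| ^ (-K)) volume a b := by
  have hloc : LocallyIntegrable (fun x : ℝ => |x| ^ (-K)) :=
    locallyIntegrable_of_norm_le_rpow (C := 1) (by simp) (by simpa using hK)
      (ae_of_all _ fun x => by simp [abs_of_nonneg (Real.rpow_nonneg (abs_nonneg x) _)])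
      (continuous_abs.measurable.pow_const _).aestronglyMeasurable
  simpa using ((hloc.integrableOn_isCompact isCompact_uIcc).intervalIntegrable
    (a := a - x₀) (b := b - x₀)).comp_sub_right x₀

theorem integrableOn_one_div_of_le_mul_abs_sub_rpow_neg {f : ℝ → ℝ} {x₀ K c a b : ℝ}
    (hK : K < 1) (hc : 0 < c) (hf : ContinuousOn f (Ioo a b))
    (hbound : ∀ x ∈ Ioo a b, x ≠ x₀ → c ≤ f x * |x - x₀| ^ (-K)) :
    IntegrableOn (fun x => 1 / f x) (Ioo a b) := by
  have hint : IntegrableOn (fun x => |x - x₀| ^ (-K) / c) (Ioo a b) :=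
    ((intervalIntegrable_abs_sub_rpow_neg hK x₀ a b).def'.mono_set
      (Ioo_subset_Ioc_self.trans Ioc_subset_uIoc)).div_const c
  refine hint.mono' ((hf.aemeasurable measurableSet_Ioo).const_div 1).aestronglyMeasurable ?_
  filter_upwards [ae_restrict_mem measurableSet_Ioo, ae_restrict_of_ae (Measure.ae_ne volume x₀)]
    with x hx hne
  have hw : 0 < |x - x₀| ^ (-K) := Real.rpow_pos_of_pos (abs_pos.2 (sub_ne_zero.2 hne)) _
  have hfx : 0 < f x := pos_of_mul_pos_left (hc.trans_le (hbound x hx hne)) hw.le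
  rw [Real.norm_of_nonneg (one_div_pos.2 hfx).le, div_le_div_iff₀ hfx hc, one_mul, mul_comm]
  exact hbound x hx hne

theorem stmt1_general (a : ℝ → ℝ) (x₀ K : ℝ)
    (hx₀ : x₀ ∈ Set.Ioo (0:ℝ) 1)
    (hpos : ∀ x ∈ Set.Icc (0:ℝ) 1, x ≠ x₀ → 0 < a x)
    (hAC : MeasureTheory.IntegrableOn (deriv a) (Set.Icc 0 1) ∧
      ∀ x ∈ Set.Icc (0:ℝ) 1, a x = a 0 + ∫ t in (0:ℝ)..x, deriv a t)
    (hK : K ∈ Set.Ioo (0:ℝ) 1)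
    (hineq : ∀ᵐ x ∂(MeasureTheory.volume.restrict (Set.Icc (0:ℝ) 1)),
      (x - x₀) * deriv a x ≤ K * a x) :
    MeasureTheory.IntegrableOn (fun x => 1 / a x) (Set.Ioo 0 1) := by
  obtain ⟨hx0, hx1⟩ := hx₀
  have hac : AbsolutelyContinuousOnInterval a 0 1 := .of_eq_add_integral
    ((intervalIntegrable_iff_integrableOn_Icc_of_le zero_le_one).2 hAC.1)
    (by simpa only [uIcc_of_le zero_le_one] using hAC.2)
  have hx₀uIcc : x₀ ∈ uIcc 0 1 := mem_uIcc_of_le hx0.le hx1.le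
  have hleft := (hac.mono (uIcc_subset_uIcc left_mem_uIcc hx₀uIcc)).monotoneOn_mul_sub_rpow_neg
    (ae_restrict_of_ae_restrict_of_subset (Ico_subset_Icc_self.trans
      (Icc_subset_Icc le_rfl hx1.le)) hineq)
  have hright := (hac.mono (uIcc_subset_uIcc hx₀uIcc right_mem_uIcc)).antitoneOn_mul_sub_rpow_neg
    (ae_restrict_of_ae_restrict_of_subset (Ioc_subset_Icc_self.trans
      (Icc_subset_Icc hx0.le le_rfl)) hineq)
  set c := min (a 0 * x₀ ^ (-K)) (a 1 * (1 - x₀) ^ (-K))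
  have hc : 0 < c := lt_min
    (mul_pos (hpos 0 (left_mem_Icc.2 zero_le_one) hx0.ne) (Real.rpow_pos_of_pos hx0 _))
    (mul_pos (hpos 1 (right_mem_Icc.2 zero_le_one) hx1.ne')
      (Real.rpow_pos_of_pos (sub_pos.2 hx1) _))
  refine integrableOn_one_div_of_le_mul_abs_sub_rpow_neg (x₀ := x₀) hK.2 hc
    (hac.continuousOn.mono (by simp [uIcc_of_le, Ioo_subset_Icc_self])) fun x hx hne => ?_
  rcases hne.lt_or_gt with hlt | hgt
  · rw [abs_sub_comm, abs_of_pos (sub_pos.2 hlt)]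
    have h := hleft ⟨le_rfl, hx0⟩ ⟨hx.1.le, hlt⟩ hx.1.le
    simp only [sub_zero] at h
    exact (min_le_left _ _).trans h
  · rw [abs_of_pos (sub_pos.2 hgt)]
    exact (min_le_right _ _).trans (hright ⟨hgt, hx.2.le⟩ ⟨hx1, le_rfl⟩ hx.2.le)

/-- Lemma 2.1.2: in the weakly degenerate case (K ∈ (0,1)), `1/a` is integrable on `(0,1)`. -/
theorem stmt1 (a : ℝ → ℝ) (x₀ K : ℝ)
    (hx₀ : x₀ ∈ Set.Ioo (0:ℝ) 1)
    (ha0 : a x₀ = 0)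
    (hpos : ∀ x ∈ Set.Icc (0:ℝ) 1, x ≠ x₀ → 0 < a x)
    (hAC : MeasureTheory.IntegrableOn (deriv a) (Set.Icc 0 1) ∧
      ∀ x ∈ Set.Icc (0:ℝ) 1, a x = a 0 + ∫ t in (0:ℝ)..x, deriv a t)
    (hK : K ∈ Set.Ioo (0:ℝ) 1)
    (hineq : ∀ᵐ x ∂(MeasureTheory.volume.restrict (Set.Icc (0:ℝ) 1)),
      (x - x₀) * deriv a x ≤ K * a x) :
    MeasureTheory.IntegrableOn (fun x => 1 / a x) (Set.Ioo 0 1) :=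
  stmt1_general a x₀ K hx₀ hpos hAC hK hineq
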